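/- Let G₂ be the graph on vertex set {a,b,c,d,e,f,g} with edge set {ab, bc, cd, de, cf, fe, fg, fd}. Then G₂ is AT-free, but G₂ is not strongly 1-laminar: the path a,b,c,d,e is a diametral path of G₂ that is not 1-dominating (the vertex g is at distance 2 from it). Hence AT-free graphs are not always strongly 1-laminar. -/

import Mathlib

open SimpleGraph

/-- A walk `p` is a diametral path: a shortest path between two vertices at distance `diam G`. -/
def IsDiametralPath {V : Type*} (G : SimpleGraph V) {u v : V} (p : G.Walk u v) : Prop :=
  p.length = G.dist u v ∧ G.dist u v = G.diam

/-- A walk `p` is `k`-dominating: every vertex of `G` is at distance at most `k`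
from some vertex of `p`. -/
def IsKDominating {V : Type*} (G : SimpleGraph V) (k : ℕ) {u v : V} (p : G.Walk u v) : Prop :=
  ∀ x : V, ∃ y ∈ p.support, G.dist x y ≤ k

/-- `G` is `k`-laminar: it has a `k`-dominating diametral path. -/
def KLaminar {V : Type*} (G : SimpleGraph V) (k : ℕ) : Prop :=
  ∃ (u v : V) (p : G.Walk u v), IsDiametralPath G p ∧ IsKDominating G k p

/-- `G` is strongly `k`-laminar: every diametral path of `G` is `k`-dominating. -/
def StronglyKLaminar {V : Type*} (G : SimpleGraph V) (k : ℕ) : Prop :=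
  ∀ (u v : V) (p : G.Walk u v), IsDiametralPath G p → IsKDominating G k p

/-- There is a walk from `a` to `b` avoiding the closed neighborhood of `c`. -/
def WalkAvoiding {V : Type*} (G : SimpleGraph V) (a b c : V) : Prop :=
  ∃ p : G.Walk a b, ∀ x ∈ p.support, x ≠ c ∧ ¬ G.Adj c x

/-- `(a, b, c)` is an asteroidal triple of `G`. -/
def IsAsteroidalTriple {V : Type*} (G : SimpleGraph V) (a b c : V) : Prop :=
  a ≠ b ∧ a ≠ c ∧ b ≠ c ∧ ¬ G.Adj a b ∧ ¬ G.Adj a c ∧ ¬ G.Adj b c ∧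
    WalkAvoiding G a b c ∧ WalkAvoiding G a c b ∧ WalkAvoiding G b c a

/-- `G` is AT-free if it contains no asteroidal triple. -/
def ATFree {V : Type*} (G : SimpleGraph V) : Prop :=
  ∀ a b c : V, ¬ IsAsteroidalTriple G a b c

/-- The graph `G₂` on vertices `a, b, c, d, e, f, g` (encoded as `0, …, 6`) with edges
`ab, bc, cd, de, cf, fe, fg, fd`. -/
def G2 : SimpleGraph (Fin 7) :=
  SimpleGraph.fromRel (fun u v =>
    (u, v) ∈ [((0:Fin 7),(1:Fin 7)),(1,2),(2,3),(3,4),(2,5),(5,4),(5,6),(5,3)])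

instance : DecidableRel G2.Adj := fun u v =>
  decidable_of_iff _ (SimpleGraph.fromRel_adj _ u v).symm

/-- The path `a, b, c, d, e`. -/
def P2 : G2.Walk 0 4 :=
  .cons (show G2.Adj 0 1 by decide) (.cons (show G2.Adj 1 2 by decide)
    (.cons (show G2.Adj 2 3 by decide) (.cons (show G2.Adj 3 4 by decide) .nil)))

/-!
`G₂` is AT-free because in every independent triple some vertex `x` has all its neighbours in
the closed neighbourhood of another member `z`, so no walk leaves `x` avoiding `N[z]`. Its
diameter is 4: every vertex is within distance 2 of `c`, and the potential
`a, b, c, d, e, f, g ↦ 0, 1, 2, 3, 4, 3, 4` grows by at most one along each edge, so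
`d(a, e) = 4`. The vertex `g` is adjacent to none of `a, b, c, d, e`.
-/

namespace SimpleGraph

variable {V : Type*} {G : SimpleGraph V}

lemma eccent_le_two_of_forall_eq_or_adj_or_exists_adj {u : V}
    (h : ∀ v, v = u ∨ G.Adj u v ∨ ∃ w, G.Adj u w ∧ G.Adj w v) :
    G.eccent u ≤ 2 := by
  rw [eccent_le_iff]
  intro v
  rcases h v with rfl | huv | ⟨w, huw, hwv⟩
  · simp
  · exact (edist_eq_one_iff_adj.mpr huv).le.trans (by norm_num)
  · calc G.edist u v ≤ G.edist u w + G.edist w v := G.edist_triangle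
      _ = 2 := by rw [edist_eq_one_iff_adj.mpr huw, edist_eq_one_iff_adj.mpr hwv]; rfl

lemma Walk.apply_le_apply_add_length (φ : V → ℕ) (hφ : ∀ x y, G.Adj x y → φ y ≤ φ x + 1)
    {u v : V} (p : G.Walk u v) : φ v ≤ φ u + p.length := by
  induction p with
  | nil => simp
  | cons hadj _ ih =>
    have := hφ _ _ hadj
    rw [Walk.length_cons]
    omega

lemma Reachable.apply_le_apply_add_dist (φ : V → ℕ) (hφ : ∀ x y, G.Adj x y → φ y ≤ φ x + 1)
    {u v : V} (h : G.Reachable u v) : φ v ≤ φ u + G.dist u v := by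
  obtain ⟨p, hp⟩ := h.exists_walk_length_eq_dist
  exact hp ▸ p.apply_le_apply_add_length φ hφ

lemma diam_eq_of_ediam_le_of_dist_eq {n : ℕ} {u v : V} (hle : G.ediam ≤ n)
    (huv : G.dist u v = n) : G.diam = n := by
  have hne : G.ediam ≠ ⊤ := ne_top_of_le_ne_top (ENat.natCast_ne_top n) hle
  refine le_antisymm ?_ (huv ▸ dist_le_diam hne)
  simpa [diam] using ENat.toNat_le_toNat hle (ENat.natCast_ne_top n)

end SimpleGraph

variable {V : Type*} {G : SimpleGraph V}

lemma not_isKDominating_of_lt_dist {k : ℕ} {u v : V} (p : G.Walk u v) (x : V)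
    (hx : ∀ y ∈ p.support, k < G.dist x y) : ¬ IsKDominating G k p := fun h => by
  obtain ⟨y, hy, hle⟩ := h x
  exact (hx y hy).not_ge hle

def LeavesClosedNbhd (G : SimpleGraph V) (x z : V) : Prop :=
  ∃ w, G.Adj x w ∧ w ≠ z ∧ ¬ G.Adj z w

instance [Fintype V] [DecidableEq V] [DecidableRel G.Adj] (x z : V) :
    Decidable (LeavesClosedNbhd G x z) := by
  unfold LeavesClosedNbhd; infer_instance

lemma WalkAvoiding.reverse {a b c : V} (h : WalkAvoiding G a b c) : WalkAvoiding G b a c := by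
  obtain ⟨p, hp⟩ := h
  exact ⟨p.reverse, fun x hx => hp x (by simpa using hx)⟩

lemma WalkAvoiding.leavesClosedNbhd {a b c : V} (h : WalkAvoiding G a b c) (hab : a ≠ b) :
    LeavesClosedNbhd G a c := by
  obtain ⟨p, hp⟩ := h
  cases p with
  | nil => exact absurd rfl hab
  | cons hadj q =>
    exact ⟨_, hadj, hp _ (List.mem_cons_of_mem _ q.start_mem_support)⟩

lemma IsAsteroidalTriple.leavesClosedNbhd {a b c : V} (h : IsAsteroidalTriple G a b c) :
    LeavesClosedNbhd G a c ∧ LeavesClosedNbhd G b c ∧ LeavesClosedNbhd G a b ∧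
      LeavesClosedNbhd G c b ∧ LeavesClosedNbhd G b a ∧ LeavesClosedNbhd G c a := by
  obtain ⟨hab, hac, hbc, -, -, -, hc, hb, ha⟩ := h
  exact ⟨hc.leavesClosedNbhd hab, hc.reverse.leavesClosedNbhd hab.symm,
    hb.leavesClosedNbhd hac, hb.reverse.leavesClosedNbhd hac.symm,
    ha.leavesClosedNbhd hbc, ha.reverse.leavesClosedNbhd hbc.symm⟩

lemma G2_ATFree : ATFree G2 := by
  have key : ∀ a b c : Fin 7, ¬ G2.Adj a b → ¬ G2.Adj a c → ¬ G2.Adj b c →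
      ¬ (LeavesClosedNbhd G2 a c ∧ LeavesClosedNbhd G2 b c ∧
      LeavesClosedNbhd G2 a b ∧ LeavesClosedNbhd G2 c b ∧ LeavesClosedNbhd G2 b a ∧
      LeavesClosedNbhd G2 c a) := by
    decide
  intro a b c hT
  have hleaves := hT.leavesClosedNbhd
  obtain ⟨-, -, -, hab, hac, hbc, -⟩ := hT
  exact key a b c hab hac hbc hleaves

lemma G2_ediam_le : G2.ediam ≤ 4 :=
  calc G2.ediam ≤ 2 * G2.eccent 2 := ediam_le_two_mul_eccent 2
    _ ≤ 2 * 2 := by gcongr; exact eccent_le_two_of_forall_eq_or_adj_or_exists_adj (by decide)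
    _ = 4 := rfl

lemma G2_connected : G2.Connected :=
  connected_of_ediam_ne_top (ne_top_of_le_ne_top (by decide) G2_ediam_le)

lemma G2_dist_zero_four : G2.dist 0 4 = 4 := by
  refine le_antisymm (dist_le P2) ?_
  simpa using (G2_connected 0 4).apply_le_apply_add_dist ![0, 1, 2, 3, 4, 3, 4] (by decide)

lemma G2_diam : G2.diam = 4 :=
  diam_eq_of_ediam_le_of_dist_eq G2_ediam_le G2_dist_zero_four

lemma P2_isDiametralPath : IsDiametralPath G2 P2 :=
  ⟨by rw [G2_dist_zero_four]; rfl, by rw [G2_dist_zero_four, G2_diam]⟩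

lemma G2_two_le_dist_six_P2 : ∀ y ∈ P2.support, 2 ≤ G2.dist 6 y := by
  have h : ∀ y ∈ P2.support, 6 ≠ y ∧ ¬ G2.Adj 6 y := by decide
  exact fun y hy => G2_connected.one_lt_dist_of_ne_of_not_adj (h y hy).1 (h y hy).2

lemma G2_dist_six_two : G2.dist 6 2 = 2 := by
  refine le_antisymm ?_ (G2_two_le_dist_six_P2 2 (by decide))
  calc G2.dist 6 2 ≤ G2.dist 6 5 + G2.dist 5 2 := G2_connected.dist_triangle
    _ = 2 := by rw [dist_eq_one_iff_adj.mpr (by decide),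
      dist_eq_one_iff_adj.mpr (by decide)]

/-- `G₂` is AT-free, but the diametral path `a, b, c, d, e` is not 1-dominating (the vertex
`g` is at distance 2 from it), so `G₂` is not strongly 1-laminar: AT-free graphs are not
always strongly 1-laminar. -/
theorem ATFree_not_always_strongly_one_laminar :
    ATFree G2 ∧ IsDiametralPath G2 P2 ∧ ¬ IsKDominating G2 1 P2 ∧
    (∀ y ∈ P2.support, 2 ≤ G2.dist 6 y) ∧ (∃ y ∈ P2.support, G2.dist 6 y = 2) ∧
    ¬ StronglyKLaminar G2 1 := by
  have hndom : ¬ IsKDominating G2 1 P2 :=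
    not_isKDominating_of_lt_dist P2 6 G2_two_le_dist_six_P2
  exact ⟨G2_ATFree, P2_isDiametralPath, hndom, G2_two_le_dist_six_P2,
    ⟨2, by decide, G2_dist_six_two⟩, fun h => hndom (h 0 4 P2 P2_isDiametralPath)⟩
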